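/- For an orthohedral set S and k ≤ rk(S), the action of G_k(S) on the rank-k germs Γ^k(S) induces an isomorphism G_k(S)/C(Γ^k(S)) ≅ sym(Γ^k(S)), the finitary symmetric group on Γ^k(S). -/

import Mathlib

open Pointwise

namespace PeiPaper

/-- Points of the face of the standard orthant spanned by the canonical basis vectors in `Y`. -/
def stdFace (N : ℕ) (Y : Finset (Fin N)) : Set (Fin N → ℤ) :=
  {v | (∀ i, 0 ≤ v i) ∧ ∀ i, i ∉ Y → v i = 0}

/-- Integral orthogonal matrix. -/
def IsOrthMat {N : ℕ} (A : Matrix (Fin N) (Fin N) ℤ) : Prop :=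
  A * A.transpose = 1

/-- `L` is an integral orthant of rank `k` in `ℤ^N`: an affine-orthogonal image of a
rank-`k` face of the standard orthant. -/
def IsOrthantOfRank {N : ℕ} (L : Set (Fin N → ℤ)) (k : ℕ) : Prop :=
  ∃ (a : Fin N → ℤ) (A : Matrix (Fin N) (Fin N) ℤ) (Y : Finset (Fin N)),
    IsOrthMat A ∧ Y.card = k ∧ L = (fun v => a + A.mulVec v) '' stdFace N Y

def IsOrthant {N : ℕ} (L : Set (Fin N → ℤ)) : Prop := ∃ k, IsOrthantOfRank L k

/-- `S` is orthohedral: a finite union of integral orthants. -/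
def IsOrthohedral {N : ℕ} (S : Set (Fin N → ℤ)) : Prop :=
  ∃ 𝓛 : Set (Set (Fin N → ℤ)), 𝓛.Finite ∧ (∀ L ∈ 𝓛, IsOrthant L) ∧ S = ⋃₀ 𝓛

/-- The rank of a set: the maximal rank of an orthant contained in it. -/
noncomputable def orthRank {N : ℕ} (S : Set (Fin N → ℤ)) : ℕ :=
  sSup {k | ∃ L, IsOrthantOfRank L k ∧ L ⊆ S}

/-- Commensurability: the intersection is nonempty and has the same rank as both sets. -/
def Commensurable {N : ℕ} (L L' : Set (Fin N → ℤ)) : Prop :=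
  (L ∩ L').Nonempty ∧ orthRank L = orthRank (L ∩ L') ∧ orthRank L' = orthRank (L ∩ L')

/-- The rank-`k` orthants contained in `S`. -/
def germSet {N : ℕ} (S : Set (Fin N → ℤ)) (k : ℕ) : Set (Set (Fin N → ℤ)) :=
  {L | IsOrthantOfRank L k ∧ L ⊆ S}

/-- The rank-`k` germs of `S`: commensurability classes of rank-`k` orthants of `S`. -/
def Germ {N : ℕ} (S : Set (Fin N → ℤ)) (k : ℕ) : Type _ :=
  Quot (fun L L' : germSet S k => Commensurable L.1 L'.1)

def germOf {N : ℕ} (S : Set (Fin N → ℤ)) (k : ℕ) (L : germSet S k) : Germ S k :=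
  Quot.mk _ L

/-- The number of rank-`k` germs of `S` (as a natural number; `0` if infinite). -/
noncomputable def heightAt {N : ℕ} (S : Set (Fin N → ℤ)) (k : ℕ) : ℕ :=
  Nat.card (Germ S k)

/-- The height of an orthohedral set: the number of germs of maximal rank. -/
noncomputable def height {N : ℕ} (S : Set (Fin N → ℤ)) : ℕ :=
  heightAt S (orthRank S)

/-- `f` is (the restriction of) an isometry of `ℤ^N` on `L`. -/
def IsometricOn {N : ℕ} (f : (Fin N → ℤ) → (Fin N → ℤ)) (L : Set (Fin N → ℤ)) : Prop :=
  ∃ (a : Fin N → ℤ) (A : Matrix (Fin N) (Fin N) ℤ),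
    IsOrthMat A ∧ ∀ x ∈ L, f x = a + A.mulVec x

/-- `f` is (the restriction of) a translation on `L`. -/
def TranslationOn {N : ℕ} (f : (Fin N → ℤ) → (Fin N → ℤ)) (L : Set (Fin N → ℤ)) : Prop :=
  ∃ a : Fin N → ℤ, ∀ x ∈ L, f x = a + x

/-- `f` is a piecewise-Euclidean-isometric map on `S`. -/
def IsPeiMapOn {N : ℕ} (S : Set (Fin N → ℤ)) (f : (Fin N → ℤ) → (Fin N → ℤ)) : Prop :=
  ∃ 𝓛 : Set (Set (Fin N → ℤ)), 𝓛.Finite ∧ (∀ L ∈ 𝓛, IsOrthant L) ∧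
    S = ⋃₀ 𝓛 ∧ 𝓛.PairwiseDisjoint id ∧ ∀ L ∈ 𝓛, IsometricOn f L

/-- `f` is a piecewise-Euclidean-translation map on `S`. -/
def IsPetMapOn {N : ℕ} (S : Set (Fin N → ℤ)) (f : (Fin N → ℤ) → (Fin N → ℤ)) : Prop :=
  ∃ 𝓛 : Set (Set (Fin N → ℤ)), 𝓛.Finite ∧ (∀ L ∈ 𝓛, IsOrthant L) ∧
    S = ⋃₀ 𝓛 ∧ 𝓛.PairwiseDisjoint id ∧ ∀ L ∈ 𝓛, TranslationOn f L

def IsPeiIso {N : ℕ} (S S' : Set (Fin N → ℤ)) (f : (Fin N → ℤ) → (Fin N → ℤ)) : Prop :=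
  IsPeiMapOn S f ∧ Set.InjOn f S ∧ f '' S = S'

def PeiIsomorphic {N : ℕ} (S S' : Set (Fin N → ℤ)) : Prop := ∃ f, IsPeiIso S S' f

def IsPetIso {N : ℕ} (S S' : Set (Fin N → ℤ)) (f : (Fin N → ℤ) → (Fin N → ℤ)) : Prop :=
  IsPetMapOn S f ∧ Set.InjOn f S ∧ f '' S = S'

def PetIsomorphic {N : ℕ} (S S' : Set (Fin N → ℤ)) : Prop := ∃ f, IsPetIso S S' f

/-- A pei-permutation of `S`: a permutation of `ℤ^N` supported on `S` which is pei on `S`. -/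
def IsPeiPerm {N : ℕ} (S : Set (Fin N → ℤ)) (g : Equiv.Perm (Fin N → ℤ)) : Prop :=
  IsPeiMapOn S ⇑g ∧ ∀ x ∉ S, g x = x

/-- The element `g` has rank at most `k`: it is supported on an orthohedral set of rank `≤ k`. -/
def rankLE {N : ℕ} (g : Equiv.Perm (Fin N → ℤ)) (k : ℕ) : Prop :=
  ∃ T : Set (Fin N → ℤ), IsOrthohedral T ∧ orthRank T ≤ k ∧ ∀ x ∉ T, g x = x

/-- `g` fixes every rank-`k` germ of `S`. -/
def FixesGerm {N : ℕ} (S : Set (Fin N → ℤ)) (k : ℕ) (g : Equiv.Perm (Fin N → ℤ)) : Prop :=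
  ∀ L, IsOrthantOfRank L k → L ⊆ S →
    ∃ L', IsOrthantOfRank L' k ∧ L' ⊆ L ∧ Commensurable L L' ∧
      IsometricOn (⇑g) L' ∧ Commensurable (⇑g '' L') L

/-- `g` fixes every rank-`k` germ of `S` and acts on its tangent coset by a translation. -/
def TranslatesGerm {N : ℕ} (S : Set (Fin N → ℤ)) (k : ℕ) (g : Equiv.Perm (Fin N → ℤ)) : Prop :=
  ∀ L, IsOrthantOfRank L k → L ⊆ S →
    ∃ L' a, IsOrthantOfRank L' k ∧ L' ⊆ L ∧ Commensurable L L' ∧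
      (∀ x ∈ L', g x = a + x) ∧ Commensurable (⇑g '' L') L

/-- `σ` is the map induced by `g` on the rank-`k` germs of `S`. -/
def InducesGermMap {N : ℕ} (S : Set (Fin N → ℤ)) (k : ℕ) (g : Equiv.Perm (Fin N → ℤ))
    (σ : Germ S k → Germ S k) : Prop :=
  ∀ L : germSet S k, ∃ (L'' : Set (Fin N → ℤ)) (M : germSet S k),
    IsOrthantOfRank L'' k ∧ L'' ⊆ L.1 ∧ Commensurable L.1 L'' ∧
    M.1 = ⇑g '' L'' ∧ σ (germOf S k L) = germOf S k M

/-- A finitary permutation which is even (has sign `1` on a finite invariant subset). -/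
def IsEvenFinitary {α : Type*} (σ : Equiv.Perm α) : Prop :=
  ∃ (F : Finset α) (σF : Equiv.Perm F),
    (∀ a ∉ F, σ a = a) ∧ (∀ a : F, σ (a : α) = (σF a : α)) ∧
    @Equiv.Perm.sign F (Classical.decEq _) inferInstance σF = 1

/-- `g` induces an even finitary permutation on the rank-`k` germs of `S`. -/
def IsEvenOnGerms {N : ℕ} (S : Set (Fin N → ℤ)) (k : ℕ) (g : Equiv.Perm (Fin N → ℤ)) : Prop :=
  ∃ σ : Equiv.Perm (Germ S k), InducesGermMap S k g ⇑σ ∧ IsEvenFinitary σ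

/-- Ordering of germs (of arbitrary ranks): `p ≤ q` if they have representatives `L ⊆ L'`. -/
def germLE {N : ℕ} (S : Set (Fin N → ℤ)) (p q : Σ k, Germ S k) : Prop :=
  ∃ (L : germSet S p.1) (L' : germSet S q.1),
    germOf S p.1 L = p.2 ∧ germOf S q.1 L' = q.2 ∧ L.1 ⊆ L'.1

/-- A maximal germ of `S`. -/
def IsMaxGerm {N : ℕ} (S : Set (Fin N → ℤ)) (p : Σ k, Germ S k) : Prop :=
  ∀ q, germLE S p q → germLE S q p

/-- A `0`-based orthant. -/
def IsBasedOrthant {N : ℕ} (L0 : Set (Fin N → ℤ)) : Prop :=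
  ∃ (A : Matrix (Fin N) (Fin N) ℤ) (Y : Finset (Fin N)),
    IsOrthMat A ∧ L0 = (fun v => A.mulVec v) '' stdFace N Y

/-- Two (oriented) parallel orthants. -/
def ParallelOrthants {N : ℕ} (L L' : Set (Fin N → ℤ)) : Prop :=
  ∃ a : Fin N → ℤ, L' = a +ᵥ L

/-- The indicator image `S_τ` of `S`: the union of the `0`-based parallel translates of
the orthants contained in `S`. -/
def indicatorImage {N : ℕ} (S : Set (Fin N → ℤ)) : Set (Fin N → ℤ) :=
  ⋃₀ {L0 | IsBasedOrthant L0 ∧ ∃ a : Fin N → ℤ, (a +ᵥ L0) ⊆ S}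

/-- The height function `h_S`: the number of maximal germs of `S` whose indicator is `L0`. -/
noncomputable def hFun {N : ℕ} (S : Set (Fin N → ℤ)) (L0 : Set (Fin N → ℤ)) : ℕ :=
  Nat.card {p : Σ k, Germ S k //
    IsMaxGerm S p ∧ ∃ L : germSet S p.1, germOf S p.1 L = p.2 ∧ ∃ a : Fin N → ℤ, L.1 = a +ᵥ L0}

/-- `S` is quasi-normal: the maximal based orthants of `S_τ` are exactly the support of `h_S`. -/
def QuasiNormal {N : ℕ} (S : Set (Fin N → ℤ)) : Prop :=
  ∀ L0 : Set (Fin N → ℤ),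
    (IsBasedOrthant L0 ∧ L0 ⊆ indicatorImage S ∧
      ∀ L1, IsBasedOrthant L1 → L1 ⊆ indicatorImage S → L0 ⊆ L1 → L1 ⊆ L0)
    ↔ (IsBasedOrthant L0 ∧ 0 < hFun S L0)

/-- The germ `q` of `S'` is the image of the germ `p` of `S` under the injective pei-map `f`. -/
def GermMapsTo {N : ℕ} (f : (Fin N → ℤ) → (Fin N → ℤ)) (S S' : Set (Fin N → ℤ))
    (p : Σ k, Germ S k) (q : Σ k, Germ S' k) : Prop :=
  p.1 = q.1 ∧ ∃ (L : germSet S p.1) (L'' : Set (Fin N → ℤ)) (M : germSet S' q.1),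
    germOf S p.1 L = p.2 ∧ IsOrthantOfRank L'' p.1 ∧ L'' ⊆ L.1 ∧ Commensurable L.1 L'' ∧
    M.1 = f '' L'' ∧ germOf S' q.1 M = q.2

/-- A stack of `h` parallel rank-`n` orthants. -/
def IsStack {N : ℕ} (S : Set (Fin N → ℤ)) (n h : ℕ) : Prop :=
  ∃ (L0 : Set (Fin N → ℤ)) (a : Fin h → (Fin N → ℤ)),
    IsOrthantOfRank L0 n ∧
    (Pairwise fun i j => Disjoint (a i +ᵥ L0) (a j +ᵥ L0)) ∧
    S = ⋃ i, a i +ᵥ L0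

/-- A coordinate half-space of `ℤ^N`. -/
def IsHalfSpace {N : ℕ} (H : Set (Fin N → ℤ)) : Prop :=
  ∃ (i : Fin N) (c : ℤ), H = {x | x i ≤ c} ∨ H = {x | c ≤ x i}

/-- The canonical embedding `ℤ^N → ℤ^{N+1}`. -/
def emb (N : ℕ) (x : Fin N → ℤ) : Fin (N + 1) → ℤ :=
  fun i => if h : (i : ℕ) < N then x ⟨i, h⟩ else 0

/-- The sum of all matrix entries of a finitely supported family of vectors. -/
noncomputable def totalSum (k : ℕ) (Γ : Type*) : (Γ →₀ (Fin k → ℤ)) →+ ℤ :=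
  Finsupp.liftAddHom (fun _ => ∑ i : Fin k, Pi.evalAddMonoidHom (fun _ => ℤ) i)

/-- The clique (flag) complex of a graph. -/
def cliqueComplex {V : Type*} (G : SimpleGraph V) : Set (Finset V) :=
  {s | s.Nonempty ∧ G.IsClique (s : Set V)}

/-- The geometric realization of a simplicial complex on vertex set `V`. -/
def realization {V : Type*} (K : Set (Finset V)) : Set (V → ℝ) :=
  {f | (∀ v, 0 ≤ f v) ∧ ∃ s ∈ K, Function.support f ⊆ ↑s ∧ ∑ v ∈ s, f v = 1}

/-- A wedge (bouquet) of `n`-spheres indexed by `ι`, with basepoint `b`. -/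
noncomputable def wedgeSpheres (ι : Type) (n : ℕ)
    (b : Metric.sphere (0 : EuclideanSpace ℝ (Fin (n + 1))) 1) : Type :=
  Quot (fun p q : Unit ⊕ (ι × Metric.sphere (0 : EuclideanSpace ℝ (Fin (n + 1))) 1) =>
    (Sum.elim (fun _ => True) (fun pr => pr.2 = b) p) ∧
    (Sum.elim (fun _ => True) (fun qr => qr.2 = b) q))

noncomputable instance (ι : Type) (n : ℕ) (b : Metric.sphere (0 : EuclideanSpace ℝ (Fin (n + 1))) 1) :
    TopologicalSpace (wedgeSpheres ι n b) :=
  letI : TopologicalSpace ι := ⊥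
  instTopologicalSpaceQuot

/-!
In suitable coordinates every orthant is a product of points and rays, `orthSet a σ 0`, and its
germ is represented by each of its deep parts `orthSet a σ t`. Deep enough, such a part lies in
every full-rank suborthant, which makes commensurability an equivalence, and it either lies in or
misses any given orthant. The latter lets a pei-permutation act on a germ through a deep part on
which it is an isometry, and shows that an element supported on finitely many orthants of rank
`≤ k` moves only germs commensurable with one of them, at most one germ each. Conversely, two
germs are transposed by exchanging a deep part of one with a representative of the other through
an affine isometry, the rest of `S` being cut by a coordinate grid into fixed orthants; and
transpositions generate the finitary symmetric group.
-/

open Filter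

section NormalForm

variable {N : ℕ}

def coordSet (c t : ℤ) : Option ℤˣ → Set ℤ
  | none => {c}
  | some e => {z | t ≤ e * (z - c)}

/-- The orthant with vertex `a` and directions `σ` (`none` for a fixed coordinate), cut down
to depth `t`; its germ does not depend on `t`. -/
def orthSet (a : Fin N → ℤ) (σ : Fin N → Option ℤˣ) (t : ℤ) : Set (Fin N → ℤ) :=
  Set.univ.pi fun i => coordSet (a i) t (σ i)

def freeCoords (σ : Fin N → Option ℤˣ) : Finset (Fin N) :=
  Finset.univ.filter fun i => (σ i).isSome

@[simp]
lemma coordSet_none (c t : ℤ) : coordSet c t none = {c} := rfl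

@[simp]
lemma mem_coordSet_some {c t z : ℤ} {e : ℤˣ} : z ∈ coordSet c t (some e) ↔ t ≤ e * (z - c) :=
  Iff.rfl

lemma vertex_mem_coordSet (c t : ℤ) (e : ℤˣ) : c + t * e ∈ coordSet c t (some e) := by
  rcases Int.units_eq_one_or e with rfl | rfl <;> simp

lemma coordSet_nonempty (c t : ℤ) : ∀ o, (coordSet c t o).Nonempty
  | none => Set.singleton_nonempty c
  | some e => ⟨_, vertex_mem_coordSet c t e⟩

lemma coordSet_anti {c t t' : ℤ} (h : t ≤ t') : ∀ o, coordSet c t' o ⊆ coordSet c t o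
  | none => subset_rfl
  | some _ => fun _ hz => h.trans hz

lemma orthSet_nonempty (a : Fin N → ℤ) (σ : Fin N → Option ℤˣ) (t : ℤ) :
    (orthSet a σ t).Nonempty :=
  Set.univ_pi_nonempty_iff.2 fun _ => coordSet_nonempty _ _ _

lemma orthSet_anti {a : Fin N → ℤ} {σ : Fin N → Option ℤˣ} {t t' : ℤ} (h : t ≤ t') :
    orthSet a σ t' ⊆ orthSet a σ t :=
  Set.pi_mono fun i _ => coordSet_anti h (σ i)

lemma mem_freeCoords {σ : Fin N → Option ℤˣ} {i : Fin N} : i ∈ freeCoords σ ↔ (σ i).isSome := by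
  simp [freeCoords]

lemma eq_some_of_coordSet_subset {c t b s : ℤ} {e : ℤˣ} :
    ∀ {p : Option ℤˣ}, coordSet c t (some e) ⊆ coordSet b s p → p = some e
  | none, h => by
    have h₁ := h (vertex_mem_coordSet c t e)
    have h₂ := h (coordSet_anti (le_add_of_nonneg_right zero_le_one) _
      (vertex_mem_coordSet c (t + 1) e))
    simp only [coordSet_none, Set.mem_singleton_iff] at h₁ h₂
    rcases Int.units_eq_one_or e with rfl | rfl <;> simp at h₁ h₂ <;> omega
  | some e', h => by
    by_contra hne
    have hz := h (coordSet_anti (le_max_left t (|b - c| - s + 1)) _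
      (vertex_mem_coordSet c (max t (|b - c| - s + 1)) e))
    rcases Int.units_eq_one_or e with rfl | rfl <;> rcases Int.units_eq_one_or e' with rfl | rfl
      <;> simp at hne hz <;> cases abs_cases (b - c) <;> omega

lemma exists_isUnit_of_sum_mul_self_eq_one {ι : Type*} [Fintype ι] [DecidableEq ι] {f : ι → ℤ}
    (h : ∑ j, f j * f j = 1) : ∃ j, IsUnit (f j) ∧ ∀ j' ≠ j, f j' = 0 := by
  obtain ⟨j, hj⟩ : ∃ j, f j ≠ 0 := by
    by_contra! h0
    simp [h0] at h
  have hsplit := Finset.add_sum_erase Finset.univ (fun j => f j * f j) (Finset.mem_univ j)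
  have hpos : 0 < f j * f j := mul_self_pos.2 hj
  have hrest : 0 ≤ ∑ j' ∈ Finset.univ.erase j, f j' * f j' :=
    Finset.sum_nonneg fun j' _ => mul_self_nonneg (f j')
  have hrest0 : ∑ j' ∈ Finset.univ.erase j, f j' * f j' = 0 := by omega
  refine ⟨j, IsUnit.of_mul_eq_one (f j) (by omega), fun j' hj' => ?_⟩
  exact mul_self_eq_zero.1 ((Finset.sum_eq_zero_iff_of_nonneg fun j' _ => mul_self_nonneg (f j')).1
    hrest0 j' (Finset.mem_erase.2 ⟨hj', Finset.mem_univ j'⟩))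

lemma IsOrthMat.exists_signed_perm {A : Matrix (Fin N) (Fin N) ℤ} (hA : IsOrthMat A) :
    ∃ (π : Equiv.Perm (Fin N)) (s : Fin N → ℤˣ), ∀ v i, A.mulVec v i = s i * v (π i) := by
  have hrow : ∀ i, ∑ j, A i j * A i j = 1 := fun i => by
    simpa [Matrix.mul_apply, Matrix.one_apply] using congrFun (congrFun hA i) i
  choose π hunit hzero using fun i => exists_isUnit_of_sum_mul_self_eq_one (hrow i)
  have hmulVec : ∀ v i, A.mulVec v i = A i (π i) * v (π i) := fun v i => by
    simp only [Matrix.mulVec, dotProduct]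
    exact Finset.sum_eq_single (π i) (fun j _ hj => by simp [hzero i j hj]) (by simp)
  have hinj : Function.Injective π := by
    intro i i' hii'
    by_contra hne
    have h0 : ∑ j, A i j * A i' j = 0 := by
      simpa [Matrix.mul_apply, Matrix.one_apply_ne hne] using congrFun (congrFun hA i) i'
    rw [Finset.sum_eq_single (π i) (fun j _ hj => by simp [hzero i j hj]) (by simp), hii'] at h0
    exact (hunit i).ne_zero (by simpa [hii', (hunit i').ne_zero] using h0)
  exact ⟨Equiv.ofBijective π hinj.bijective_of_finite, fun i => (hunit i).unit,
    fun v i => hmulVec v i⟩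

@[simp]
lemma units_coe_mul_units_coe_mul (e : ℤˣ) (x : ℤ) : (e : ℤ) * (e * x) = x := by
  rw [← mul_assoc, Int.units_coe_mul_self, one_mul]

lemma isOrthantOfRank_orthSet (a : Fin N → ℤ) (σ : Fin N → Option ℤˣ) (t : ℤ) :
    IsOrthantOfRank (orthSet a σ t) (freeCoords σ).card := by
  set d : Fin N → ℤ := fun i => ((σ i).getD 1 : ℤˣ)
  set b : Fin N → ℤ := fun i => a i + t * (σ i).elim 0 (fun e => (e : ℤ))
  have hd : ∀ i, d i * d i = 1 := fun i => Int.units_coe_mul_self _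
  refine ⟨b, Matrix.diagonal d, freeCoords σ, ?_, rfl, ?_⟩
  · rw [IsOrthMat, Matrix.diagonal_transpose, Matrix.diagonal_mul_diagonal]
    simp [hd]
  ext x
  constructor
  · intro hx
    refine ⟨fun i => d i * (x i - b i), ⟨fun i => ?_, fun i hi => ?_⟩, ?_⟩
    · have hxi := hx i (Set.mem_univ i)
      rcases hσ : σ i with _ | e
      · simp_all [d, b]
      · simp only [hσ, mem_coordSet_some, d, b, Option.getD_some, Option.elim_some] at hxi ⊢
        linear_combination hxi + t * Int.units_coe_mul_self e
    · rw [mem_freeCoords, Option.not_isSome_iff_eq_none] at hi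
      have hxi := hx i (Set.mem_univ i)
      simp_all [orthSet, d, b]
    · ext i
      simp [Matrix.mulVec_diagonal, d]
  · rintro ⟨v, ⟨hv0, hvY⟩, rfl⟩ i -
    rcases hσ : σ i with _ | e
    · have := hvY i (by simp [mem_freeCoords, hσ])
      simp [Matrix.mulVec_diagonal, b, hσ, this]
    · simp only [Pi.add_apply, Matrix.mulVec_diagonal, hσ, mem_coordSet_some, b, d,
        Option.elim_some, Option.getD_some]
      linear_combination hv0 i - (t + v i) * Int.units_coe_mul_self e

lemma IsOrthantOfRank.exists_orthSet {L : Set (Fin N → ℤ)} {k : ℕ} (h : IsOrthantOfRank L k) :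
    ∃ a σ, (freeCoords σ).card = k ∧ L = orthSet a σ 0 := by
  classical
  obtain ⟨a, A, Y, hA, rfl, rfl⟩ := h
  obtain ⟨π, s, hs⟩ := hA.exists_signed_perm
  refine ⟨a, fun i => if π i ∈ Y then some (s i) else none, ?_, ?_⟩
  · have : freeCoords (fun i => if π i ∈ Y then some (s i) else none) =
        Y.map π.symm.toEmbedding := by
      ext i
      simp [mem_freeCoords, Finset.mem_map_equiv]
    rw [this, Finset.card_map]
  ext x
  constructor
  · rintro ⟨v, ⟨hv0, hvY⟩, rfl⟩ i -
    by_cases hi : π i ∈ Y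
    · simpa [hi, hs] using hv0 (π i)
    · simp [hi, hs, hvY (π i) hi]
  · intro hx
    refine ⟨fun j => s (π.symm j) * (x (π.symm j) - a (π.symm j)),
      ⟨fun j => ?_, fun j hj => ?_⟩, ?_⟩
    · obtain ⟨i, rfl⟩ := π.surjective j
      have hxi := hx i (Set.mem_univ i)
      by_cases hi : π i ∈ Y <;> simp_all
    · obtain ⟨i, rfl⟩ := π.surjective j
      have hxi := hx i (Set.mem_univ i)
      simp_all
    · ext i
      simp [hs]

end NormalForm

section Depth

variable {N : ℕ}

lemma coordSet_dichotomy (c b : ℤ) (o p : Option ℤˣ) :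
    (∀ᶠ t in atTop, coordSet c t o ⊆ coordSet b 0 p) ∨
      ∀ᶠ t in atTop, Disjoint (coordSet c t o) (coordSet b 0 p) := by
  rcases o with _ | e
  · by_cases h : c ∈ coordSet b 0 p
    · exact .inl (.of_forall fun _ => Set.singleton_subset_iff.2 h)
    · exact .inr (.of_forall fun _ => Set.disjoint_singleton_left.2 h)
  rcases p with _ | e'
  · refine .inr ((eventually_gt_atTop (e * (b - c))).mono fun t ht => ?_)
    exact Set.disjoint_singleton_right.2 fun hb => (mem_coordSet_some.1 hb).not_gt ht
  by_cases he : e' = e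
  · subst he
    refine .inl ((eventually_ge_atTop (e' * (b - c))).mono fun t ht z hz => ?_)
    simp only [mem_coordSet_some] at hz ⊢
    linarith
  · refine .inr ((eventually_gt_atTop (e * (b - c))).mono fun t ht => ?_)
    refine Set.disjoint_left.2 fun z hz hz' => ?_
    simp only [mem_coordSet_some] at hz hz'
    rcases Int.units_eq_one_or e with rfl | rfl <;> rcases Int.units_eq_one_or e' with rfl | rfl
      <;> simp at he hz hz' ht <;> omega

lemma orthSet_dichotomy (a : Fin N → ℤ) (σ : Fin N → Option ℤˣ) {P : Set (Fin N → ℤ)}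
    (hP : IsOrthant P) :
    (∀ᶠ t in atTop, orthSet a σ t ⊆ P) ∨ ∀ᶠ t in atTop, Disjoint (orthSet a σ t) P := by
  obtain ⟨m, hm⟩ := hP
  obtain ⟨b, τ, -, rfl⟩ := hm.exists_orthSet
  by_cases h : ∀ i, ∀ᶠ t in atTop, coordSet (a i) t (σ i) ⊆ coordSet (b i) 0 (τ i)
  · exact .inl ((eventually_all.2 h).mono fun t ht => Set.pi_mono fun i _ => ht i)
  · obtain ⟨i, hi⟩ := not_forall.1 h
    exact .inr (((coordSet_dichotomy _ _ _ _).resolve_left hi).mono fun t ht =>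
      Set.disjoint_univ_pi.2 ⟨i, ht⟩)

lemma exists_eventually_orthSet_subset {a : Fin N → ℤ} {σ : Fin N → Option ℤˣ}
    {𝓛 : Set (Set (Fin N → ℤ))} (h𝓛 : 𝓛.Finite) (horth : ∀ P ∈ 𝓛, IsOrthant P)
    (hsub : orthSet a σ 0 ⊆ ⋃₀ 𝓛) : ∃ P ∈ 𝓛, ∀ᶠ t in atTop, orthSet a σ t ⊆ P := by
  by_contra! h
  have hdisj : ∀ᶠ t in atTop, ∀ P ∈ 𝓛, Disjoint (orthSet a σ t) P :=
    h𝓛.eventually_all.2 fun P hP =>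
      (orthSet_dichotomy a σ (horth P hP)).resolve_left (not_eventually.2 (h P hP))
  obtain ⟨t, ht, ht0⟩ := (hdisj.and (eventually_ge_atTop 0)).exists
  obtain ⟨x, hx⟩ := orthSet_nonempty a σ t
  obtain ⟨P, hP, hxP⟩ := hsub (orthSet_anti ht0 hx)
  exact Set.disjoint_left.1 (ht P hP) hx hxP

lemma coordSet_subset_coordSet_of_orthSet_subset {a b : Fin N → ℤ} {σ τ : Fin N → Option ℤˣ}
    {t s : ℤ} (h : orthSet a σ t ⊆ orthSet b τ s) (i : Fin N) :
    coordSet (a i) t (σ i) ⊆ coordSet (b i) s (τ i) :=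
  (Set.pi_subset_pi_iff.1 h).resolve_right (orthSet_nonempty a σ t).ne_empty i (Set.mem_univ i)

lemma freeCoords_subset_of_orthSet_subset {a b : Fin N → ℤ} {σ τ : Fin N → Option ℤˣ}
    {t s : ℤ} (h : orthSet a σ t ⊆ orthSet b τ s) : freeCoords σ ⊆ freeCoords τ := by
  intro i hi
  obtain ⟨e, he⟩ := Option.isSome_iff_exists.1 (mem_freeCoords.1 hi)
  have := coordSet_subset_coordSet_of_orthSet_subset h i
  rw [he] at this
  simp [mem_freeCoords, eq_some_of_coordSet_subset this]

lemma rank_le_of_subset {Q L : Set (Fin N → ℤ)} {m k : ℕ} (hQ : IsOrthantOfRank Q m)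
    (hL : IsOrthantOfRank L k) (h : Q ⊆ L) : m ≤ k := by
  obtain ⟨b, τ, rfl, rfl⟩ := hQ.exists_orthSet
  obtain ⟨a, σ, rfl, rfl⟩ := hL.exists_orthSet
  exact Finset.card_le_card (freeCoords_subset_of_orthSet_subset h)

lemma eventually_orthSet_subset_of_subset {a : Fin N → ℤ} {σ : Fin N → Option ℤˣ}
    {Q : Set (Fin N → ℤ)} (hQ : IsOrthantOfRank Q (freeCoords σ).card)
    (h : Q ⊆ orthSet a σ 0) : ∀ᶠ t in atTop, orthSet a σ t ⊆ Q := by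
  obtain ⟨b, τ, hτ, rfl⟩ := hQ.exists_orthSet
  have hfree : freeCoords τ = freeCoords σ :=
    Finset.eq_of_subset_of_card_le (freeCoords_subset_of_orthSet_subset h) hτ.ge
  refine (eventually_all.2 fun i => ?_).mono fun t ht => Set.pi_mono fun i _ => ht i
  have hi := coordSet_subset_coordSet_of_orthSet_subset h i
  rcases hτi : τ i with _ | e
  · have hσi : σ i = none := by
      simpa [mem_freeCoords, hτi] using (Finset.ext_iff.1 hfree i).symm
    rw [hτi, hσi] at hi
    rw [hσi, Set.singleton_subset_iff.1 hi]
    exact .of_forall fun _ => subset_rfl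
  · rw [hτi] at hi
    rw [eq_some_of_coordSet_subset hi]
    refine (eventually_ge_atTop (e * (b i - a i))).mono fun t ht z hz => ?_
    simp only [mem_coordSet_some] at hz ⊢
    linarith

end Depth

section Commensurable

variable {N : ℕ}

lemma IsOrthantOfRank.rank_le {L : Set (Fin N → ℤ)} {k : ℕ} (h : IsOrthantOfRank L k) : k ≤ N := by
  obtain ⟨-, -, Y, -, rfl, -⟩ := h
  simpa using Finset.card_le_univ Y

lemma IsOrthantOfRank.nonempty {L : Set (Fin N → ℤ)} {k : ℕ} (h : IsOrthantOfRank L k) :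
    L.Nonempty := by
  obtain ⟨a, σ, -, rfl⟩ := h.exists_orthSet
  exact orthSet_nonempty a σ 0

lemma isOrthantOfRank_singleton (x : Fin N → ℤ) : IsOrthantOfRank {x} 0 := by
  simpa [orthSet, freeCoords, Set.univ_pi_singleton] using
    isOrthantOfRank_orthSet x (fun _ => none) 0

lemma bddAbove_orthantRanks (X : Set (Fin N → ℤ)) :
    BddAbove {k | ∃ L, IsOrthantOfRank L k ∧ L ⊆ X} :=
  ⟨N, fun _ ⟨_, hL, _⟩ => hL.rank_le⟩

lemma le_orthRank {Q X : Set (Fin N → ℤ)} {m : ℕ} (hQ : IsOrthantOfRank Q m) (h : Q ⊆ X) :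
    m ≤ orthRank X :=
  le_csSup (bddAbove_orthantRanks X) ⟨Q, hQ, h⟩

lemma orthRank_eq_of_subset_of_subset {Q X L : Set (Fin N → ℤ)} {k : ℕ}
    (hQ : IsOrthantOfRank Q k) (hL : IsOrthantOfRank L k) (hQX : Q ⊆ X) (hXL : X ⊆ L) :
    orthRank X = k :=
  le_antisymm (csSup_le' fun _ ⟨_, hP, hPX⟩ => rank_le_of_subset hP hL (hPX.trans hXL))
    (le_orthRank hQ hQX)

lemma IsOrthantOfRank.orthRank_eq {L : Set (Fin N → ℤ)} {k : ℕ} (h : IsOrthantOfRank L k) :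
    orthRank L = k :=
  orthRank_eq_of_subset_of_subset h h subset_rfl subset_rfl

lemma exists_isOrthantOfRank_orthRank {X : Set (Fin N → ℤ)} (hX : X.Nonempty) :
    ∃ Q, IsOrthantOfRank Q (orthRank X) ∧ Q ⊆ X := by
  obtain ⟨x, hx⟩ := hX
  exact Nat.sSup_mem (s := {k | ∃ L, IsOrthantOfRank L k ∧ L ⊆ X})
    ⟨0, {x}, isOrthantOfRank_singleton x, Set.singleton_subset_iff.2 hx⟩ (bddAbove_orthantRanks X)

lemma orthRank_sUnion_le {𝓛 : Set (Set (Fin N → ℤ))} {k : ℕ} (h𝓛 : 𝓛.Finite)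
    (hrank : ∀ P ∈ 𝓛, ∃ m ≤ k, IsOrthantOfRank P m) : orthRank (⋃₀ 𝓛) ≤ k := by
  refine csSup_le' fun m ⟨Q, hQ, hQ𝓛⟩ => ?_
  obtain ⟨a, σ, rfl, rfl⟩ := hQ.exists_orthSet
  obtain ⟨P, hP, hev⟩ := exists_eventually_orthSet_subset h𝓛
    (fun P hP => (hrank P hP).imp fun _ h => h.2) hQ𝓛
  obtain ⟨m, hmk, hPm⟩ := hrank P hP
  obtain ⟨t, ht⟩ := hev.exists
  exact (rank_le_of_subset (isOrthantOfRank_orthSet a σ t) hPm ht).trans hmk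

lemma commensurable_iff {L M : Set (Fin N → ℤ)} {k : ℕ} (hL : IsOrthantOfRank L k)
    (hM : IsOrthantOfRank M k) :
    Commensurable L M ↔ ∃ Q, IsOrthantOfRank Q k ∧ Q ⊆ L ∩ M := by
  constructor
  · rintro ⟨hne, hLM, -⟩
    obtain ⟨Q, hQ, hQLM⟩ := exists_isOrthantOfRank_orthRank hne
    rw [← hLM, hL.orthRank_eq] at hQ
    exact ⟨Q, hQ, hQLM⟩
  · rintro ⟨Q, hQ, hQLM⟩
    have h := orthRank_eq_of_subset_of_subset hQ hL hQLM Set.inter_subset_left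
    exact ⟨hQ.nonempty.mono hQLM, by rw [h, hL.orthRank_eq], by rw [h, hM.orthRank_eq]⟩

lemma commensurable_of_subset {Q L : Set (Fin N → ℤ)} {k : ℕ} (hQ : IsOrthantOfRank Q k)
    (hL : IsOrthantOfRank L k) (h : Q ⊆ L) : Commensurable L Q :=
  (commensurable_iff hL hQ).2 ⟨Q, hQ, Set.subset_inter h subset_rfl⟩

lemma commensurable_refl {L : Set (Fin N → ℤ)} {k : ℕ} (hL : IsOrthantOfRank L k) :
    Commensurable L L :=
  commensurable_of_subset hL hL subset_rfl

lemma Commensurable.symm {L M : Set (Fin N → ℤ)} (h : Commensurable L M) : Commensurable M L := by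
  obtain ⟨hne, hL, hM⟩ := h
  rw [Set.inter_comm] at hne hL hM
  exact ⟨hne, hM, hL⟩

lemma Commensurable.trans {L M P : Set (Fin N → ℤ)} {k : ℕ} (h₁ : Commensurable L M)
    (h₂ : Commensurable M P) (hL : IsOrthantOfRank L k) (hM : IsOrthantOfRank M k)
    (hP : IsOrthantOfRank P k) : Commensurable L P := by
  obtain ⟨Q₁, hQ₁, hQ₁LM⟩ := (commensurable_iff hL hM).1 h₁
  obtain ⟨Q₂, hQ₂, hQ₂MP⟩ := (commensurable_iff hM hP).1 h₂
  obtain ⟨a, σ, rfl, rfl⟩ := hM.exists_orthSet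
  obtain ⟨t, ht₁, ht₂⟩ :=
    ((eventually_orthSet_subset_of_subset hQ₁ (hQ₁LM.trans Set.inter_subset_right)).and
      (eventually_orthSet_subset_of_subset hQ₂ (hQ₂MP.trans Set.inter_subset_left))).exists
  exact (commensurable_iff hL hP).2 ⟨orthSet a σ t, isOrthantOfRank_orthSet a σ t,
    Set.subset_inter ((ht₁.trans hQ₁LM).trans Set.inter_subset_left)
      ((ht₂.trans hQ₂MP).trans Set.inter_subset_right)⟩

lemma Commensurable.rank_eq {L Q : Set (Fin N → ℤ)} {k m : ℕ} (h : Commensurable L Q)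
    (hL : IsOrthantOfRank L k) (hQ : IsOrthantOfRank Q m) : m = k := by
  rw [← hQ.orthRank_eq, ← hL.orthRank_eq, h.2.1, h.2.2]

lemma eventually_disjoint_of_not_commensurable {a : Fin N → ℤ} {σ : Fin N → Option ℤˣ}
    {Q : Set (Fin N → ℤ)} {m : ℕ} (hQ : IsOrthantOfRank Q m) (hm : m ≤ (freeCoords σ).card)
    (h : ¬Commensurable (orthSet a σ 0) Q) : ∀ᶠ t in atTop, Disjoint (orthSet a σ t) Q := by
  refine (orthSet_dichotomy a σ ⟨m, hQ⟩).resolve_left fun hsub => h ?_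
  obtain ⟨t, ht, ht0⟩ := (hsub.and (eventually_ge_atTop 0)).exists
  have hdeep := isOrthantOfRank_orthSet a σ t
  rw [le_antisymm hm (rank_le_of_subset hdeep hQ ht)] at hQ
  exact (commensurable_iff (isOrthantOfRank_orthSet a σ 0) hQ).2
    ⟨_, hdeep, Set.subset_inter (orthSet_anti ht0) ht⟩

end Commensurable

section Germ

variable {N : ℕ} {S : Set (Fin N → ℤ)} {k : ℕ}

lemma germ_equivalence (S : Set (Fin N → ℤ)) (k : ℕ) :
    Equivalence fun L M : germSet S k => Commensurable L.1 M.1 :=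
  ⟨fun L => commensurable_refl L.2.1, Commensurable.symm,
    fun {L M P} h₁ h₂ => h₁.trans h₂ L.2.1 M.2.1 P.2.1⟩

lemma germOf_eq_germOf_iff {L M : germSet S k} :
    germOf S k L = germOf S k M ↔ Commensurable L.1 M.1 :=
  Quot.eq.trans (germ_equivalence S k).eqvGen_iff

end Germ

section Isometry

variable {N : ℕ}

lemma IsOrthMat.transpose {A : Matrix (Fin N) (Fin N) ℤ} (hA : IsOrthMat A) :
    IsOrthMat A.transpose := by
  rw [IsOrthMat, Matrix.transpose_transpose]
  exact mul_eq_one_comm.1 hA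

lemma IsOrthMat.mul {A B : Matrix (Fin N) (Fin N) ℤ} (hA : IsOrthMat A) (hB : IsOrthMat B) :
    IsOrthMat (A * B) := by
  rw [IsOrthMat, Matrix.transpose_mul, Matrix.mul_assoc, ← Matrix.mul_assoc B, hB,
    Matrix.one_mul, hA]

lemma isOrthMat_permMatrix (π : Equiv.Perm (Fin N)) : IsOrthMat (π.permMatrix ℤ) := by
  rw [IsOrthMat, Matrix.transpose_permMatrix, ← Matrix.permMatrix_mul, inv_mul_cancel,
    Matrix.permMatrix_one]

variable {f g : (Fin N → ℤ) → (Fin N → ℤ)} {C D : Set (Fin N → ℤ)}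

lemma IsometricOn.mono (hf : IsometricOn f C) (h : D ⊆ C) : IsometricOn f D :=
  let ⟨c, A, hA, hfC⟩ := hf
  ⟨c, A, hA, fun x hx => hfC x (h hx)⟩

lemma IsometricOn.congr (hf : IsometricOn f C) (h : ∀ x ∈ C, g x = f x) : IsometricOn g C :=
  let ⟨c, A, hA, hfC⟩ := hf
  ⟨c, A, hA, fun x hx => (h x hx).trans (hfC x hx)⟩

lemma isometricOn_of_forall_eq (h : ∀ x ∈ C, f x = x) : IsometricOn f C :=
  ⟨0, 1, by simp [IsOrthMat], fun x hx => by simp [h x hx]⟩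

lemma IsometricOn.comp (hg : IsometricOn g (f '' C)) (hf : IsometricOn f C) :
    IsometricOn (g ∘ f) C := by
  obtain ⟨c, A, hA, hgC⟩ := hg
  obtain ⟨d, B, hB, hfC⟩ := hf
  refine ⟨c + A.mulVec d, A * B, hA.mul hB, fun x hx => ?_⟩
  rw [Function.comp_apply, hgC _ (Set.mem_image_of_mem f hx), hfC x hx, Matrix.mulVec_add,
    Matrix.mulVec_mulVec, add_assoc]

lemma IsometricOn.symm_image {e : Equiv.Perm (Fin N → ℤ)} (he : IsometricOn e C) :
    IsometricOn e.symm (e '' C) := by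
  obtain ⟨c, A, hA, heC⟩ := he
  refine ⟨-A.transpose.mulVec c, A.transpose, hA.transpose, ?_⟩
  rintro _ ⟨x, hx, rfl⟩
  rw [e.symm_apply_apply, heC x hx, Matrix.mulVec_add, Matrix.mulVec_mulVec,
    mul_eq_one_comm.1 hA, Matrix.one_mulVec, neg_add_cancel_left]

lemma IsometricOn.isOrthantOfRank_image {L : Set (Fin N → ℤ)} {k : ℕ} (hf : IsometricOn f L)
    (hL : IsOrthantOfRank L k) : IsOrthantOfRank (f '' L) k := by
  obtain ⟨c, A, hA, hfL⟩ := hf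
  obtain ⟨a, B, Y, hB, hY, rfl⟩ := hL
  refine ⟨c + A.mulVec a, A * B, Y, hA.mul hB, hY, ?_⟩
  rw [Set.image_image]
  refine Set.image_congr fun v hv => ?_
  rw [hfL _ (Set.mem_image_of_mem _ hv), Matrix.mulVec_add, Matrix.mulVec_mulVec, add_assoc]

end Isometry

section GermMap

variable {N : ℕ} {S : Set (Fin N → ℤ)} {k : ℕ} {g h : Equiv.Perm (Fin N → ℤ)}

/-- For `L` of rank `k`, such a `C` represents the germ of `L` and `f '' C` its image germ. -/
def IsIsometricSuborthant (f : (Fin N → ℤ) → (Fin N → ℤ)) (k : ℕ) (L C : Set (Fin N → ℤ)) :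
    Prop :=
  C ⊆ L ∧ IsOrthantOfRank C k ∧ IsometricOn f C

lemma IsPeiPerm.image_subset (hg : IsPeiPerm S g) : g '' S ⊆ S := by
  rintro _ ⟨x, hx, rfl⟩
  by_contra hgx
  exact hgx (by rwa [g.injective (hg.2 _ hgx)])

lemma IsPeiPerm.exists_isIsometricSuborthant (hg : IsPeiPerm S g) {L : Set (Fin N → ℤ)}
    (hL : L ∈ germSet S k) : ∃ C, IsIsometricSuborthant g k L C := by
  obtain ⟨⟨𝓛, h𝓛, horth, hS, -, hiso⟩, -⟩ := hg
  obtain ⟨a, σ, rfl, rfl⟩ := hL.1.exists_orthSet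
  obtain ⟨P, hP, hev⟩ := exists_eventually_orthSet_subset h𝓛 horth (hS ▸ hL.2)
  obtain ⟨t, ht, ht0⟩ := (hev.and (eventually_ge_atTop 0)).exists
  exact ⟨orthSet a σ t, orthSet_anti ht0, isOrthantOfRank_orthSet a σ t, (hiso P hP).mono ht⟩

lemma IsIsometricSuborthant.commensurable {f : (Fin N → ℤ) → (Fin N → ℤ)}
    {L C : Set (Fin N → ℤ)} (hC : IsIsometricSuborthant f k L C) (hL : IsOrthantOfRank L k) :
    Commensurable L C :=
  commensurable_of_subset hC.2.1 hL hC.1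

lemma IsIsometricSuborthant.image_mem_germSet {L C : Set (Fin N → ℤ)}
    (hC : IsIsometricSuborthant g k L C) (hg : IsPeiPerm S g) (hL : L ∈ germSet S k) :
    g '' C ∈ germSet S k :=
  ⟨hC.2.2.isOrthantOfRank_image hC.2.1, (Set.image_mono (hC.1.trans hL.2)).trans hg.image_subset⟩

lemma commensurable_image_of_isIsometricSuborthant {f : (Fin N → ℤ) → (Fin N → ℤ)}
    {L M C D : Set (Fin N → ℤ)} (hL : IsOrthantOfRank L k) (hM : IsOrthantOfRank M k)
    (hLM : Commensurable L M) (hC : IsIsometricSuborthant f k L C)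
    (hD : IsIsometricSuborthant f k M D) : Commensurable (f '' C) (f '' D) := by
  have hCD : Commensurable C D :=
    (((hC.commensurable hL).symm.trans hLM hC.2.1 hL hM).trans (hD.commensurable hM) hC.2.1 hM
      hD.2.1)
  obtain ⟨Q, hQ, hQCD⟩ := (commensurable_iff hC.2.1 hD.2.1).1 hCD
  exact (commensurable_iff (hC.2.2.isOrthantOfRank_image hC.2.1)
    (hD.2.2.isOrthantOfRank_image hD.2.1)).2
    ⟨f '' Q, (hC.2.2.mono (hQCD.trans Set.inter_subset_left)).isOrthantOfRank_image hQ,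
      (Set.image_mono hQCD).trans (Set.image_inter_subset f C D)⟩

noncomputable def germMap (g : Equiv.Perm (Fin N → ℤ)) (hg : IsPeiPerm S g) :
    Germ S k → Germ S k :=
  Quot.lift
    (fun L => germOf S k ⟨g '' (hg.exists_isIsometricSuborthant L.2).choose,
      (hg.exists_isIsometricSuborthant L.2).choose_spec.image_mem_germSet hg L.2⟩)
    fun L M hLM => Quot.sound <| commensurable_image_of_isIsometricSuborthant L.2.1 M.2.1 hLM
      (hg.exists_isIsometricSuborthant L.2).choose_spec
      (hg.exists_isIsometricSuborthant M.2).choose_spec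

lemma germMap_germOf (hg : IsPeiPerm S g) (L : germSet S k) {C : Set (Fin N → ℤ)}
    (hC : IsIsometricSuborthant g k L.1 C) :
    germMap g hg (germOf S k L) = germOf S k ⟨g '' C, hC.image_mem_germSet hg L.2⟩ :=
  Quot.sound <| commensurable_image_of_isIsometricSuborthant L.2.1 L.2.1
    (commensurable_refl L.2.1) (hg.exists_isIsometricSuborthant L.2).choose_spec hC

lemma germMap_germOf_of_forall_eq (hg : IsPeiPerm S g) (L : germSet S k)
    {C : Set (Fin N → ℤ)} (hCL : C ⊆ L.1) (hC : IsOrthantOfRank C k) (hfix : ∀ x ∈ C, g x = x) :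
    germMap g hg (germOf S k L) = germOf S k L := by
  have hgC : IsIsometricSuborthant g k L.1 C := ⟨hCL, hC, isometricOn_of_forall_eq hfix⟩
  rw [germMap_germOf hg L hgC, germOf_eq_germOf_iff]
  change Commensurable (g '' C) L.1
  rw [Set.image_congr hfix, Set.image_id']
  exact (hgC.commensurable L.2.1).symm

lemma germMap_one (h1 : IsPeiPerm S 1) (γ : Germ S k) : germMap 1 h1 γ = γ := by
  induction γ using Quot.ind with
  | mk L => exact germMap_germOf_of_forall_eq h1 L subset_rfl L.2.1 fun _ _ => rfl

lemma germMap_mul (hg : IsPeiPerm S g) (hh : IsPeiPerm S h) (hgh : IsPeiPerm S (g * h))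
    (γ : Germ S k) : germMap (g * h) hgh γ = germMap g hg (germMap h hh γ) := by
  induction γ using Quot.ind with
  | mk L =>
  obtain ⟨C, hC⟩ := hh.exists_isIsometricSuborthant L.2
  obtain ⟨D, hD⟩ := hg.exists_isIsometricSuborthant (hC.image_mem_germSet hh L.2)
  have hDC : h.symm '' D ⊆ C := (Set.image_mono hD.1).trans (h.symm_image_image C).subset
  have hghD : IsIsometricSuborthant (g * h) k L.1 (h.symm '' D) :=
    ⟨hDC.trans hC.1, (hC.2.2.symm_image.mono hD.1).isOrthantOfRank_image hD.2.1,
      (hD.2.2.mono (h.image_symm_image D).subset).comp (hC.2.2.mono hDC)⟩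
  change germMap (g * h) hgh (germOf S k L) = germMap g hg (germMap h hh (germOf S k L))
  rw [germMap_germOf hgh L hghD, germMap_germOf hh L hC, germMap_germOf hg _ hD]
  congr 2
  rw [Equiv.Perm.coe_mul, Set.image_comp, h.image_symm_image]

noncomputable def germHom (H : Subgroup (Equiv.Perm (Fin N → ℤ)))
    (hH : ∀ g ∈ H, IsPeiPerm S g) : H →* Equiv.Perm (Germ S k) :=
  letI : MulAction H (Germ S k) :=
    { smul := fun g => germMap g (hH g g.2)
      one_smul := germMap_one (hH 1 H.one_mem)
      mul_smul := fun g h => germMap_mul (hH g g.2) (hH h h.2) (hH (g * h) (g * h).2) }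
  MulAction.toPermHom H (Germ S k)

lemma inducesGermMap_germMap (hg : IsPeiPerm S g) : InducesGermMap S k g (germMap g hg) := by
  intro L
  obtain ⟨C, hC⟩ := hg.exists_isIsometricSuborthant L.2
  exact ⟨C, ⟨g '' C, hC.image_mem_germSet hg L.2⟩, hC.2.1, hC.1, hC.commensurable L.2.1, rfl,
    germMap_germOf hg L hC⟩

lemma forall_germMap_eq_iff (hg : IsPeiPerm S g) :
    (∀ γ : Germ S k, germMap g hg γ = γ) ↔ FixesGerm S k g := by
  constructor
  · intro hfix L hL hLS
    obtain ⟨C, hC⟩ := hg.exists_isIsometricSuborthant ⟨hL, hLS⟩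
    have := hfix (germOf S k ⟨L, hL, hLS⟩)
    rw [germMap_germOf hg _ hC, germOf_eq_germOf_iff] at this
    exact ⟨C, hC.2.1, hC.1, hC.commensurable hL, hC.2.2, this⟩
  · intro hfix γ
    induction γ using Quot.ind with
    | mk L =>
    obtain ⟨C, hC, hCL, -, hiso, hcomm⟩ := hfix L.1 L.2.1 L.2.2
    change germMap g hg (germOf S k L) = germOf S k L
    rw [germMap_germOf hg L ⟨hCL, hC, hiso⟩, germOf_eq_germOf_iff]
    exact hcomm

end GermMap

section FiniteSupport

variable {N : ℕ} {S : Set (Fin N → ℤ)} {k : ℕ} {g : Equiv.Perm (Fin N → ℤ)}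

/-- A germ moved by `g` is commensurable with one of the finitely many orthants of rank `≤ k`
covering the support of `g`, and each of them is commensurable with at most one germ. -/
lemma finite_setOf_germMap_ne (hg : IsPeiPerm S g) (hrk : rankLE g k) :
    {γ : Germ S k | germMap g hg γ ≠ γ}.Finite := by
  obtain ⟨_, ⟨𝓣, h𝓣, horth, rfl⟩, hk, hfix⟩ := hrk
  have hrank : ∀ Q ∈ 𝓣, ∃ m ≤ k, IsOrthantOfRank Q m := fun Q hQ => by
    obtain ⟨m, hm⟩ := horth Q hQ
    exact ⟨m, (le_orthRank hm (Set.subset_sUnion_of_mem hQ)).trans hk, hm⟩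
  refine (h𝓣.biUnion (t := fun Q =>
    {γ : Germ S k | ∃ L : germSet S k, germOf S k L = γ ∧ Commensurable L.1 Q})
    fun Q hQ => ?_).subset fun γ hγ => ?_
  · refine Set.Subsingleton.finite ?_
    rintro _ ⟨L₁, rfl, h₁⟩ _ ⟨L₂, rfl, h₂⟩
    obtain ⟨m, -, hQm⟩ := hrank Q hQ
    rw [h₁.rank_eq L₁.2.1 hQm] at hQm
    exact germOf_eq_germOf_iff.2 (h₁.trans h₂.symm L₁.2.1 hQm L₂.2.1)
  obtain ⟨L, rfl⟩ := Quot.exists_rep γ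
  by_contra hout
  have hnc : ∀ Q ∈ 𝓣, ¬Commensurable L.1 Q := fun Q hQ hLQ =>
    hout (Set.mem_biUnion hQ ⟨L, rfl, hLQ⟩)
  obtain ⟨a, σ, hσ, hL⟩ := L.2.1.exists_orthSet
  have hev : ∀ᶠ t in atTop, ∀ Q ∈ 𝓣, Disjoint (orthSet a σ t) Q :=
    h𝓣.eventually_all.2 fun Q hQ => by
      obtain ⟨m, hm, hQm⟩ := hrank Q hQ
      exact eventually_disjoint_of_not_commensurable hQm (hσ ▸ hm) (hL ▸ hnc Q hQ)
  obtain ⟨t, ht, ht0⟩ := (hev.and (eventually_ge_atTop 0)).exists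
  refine hγ (germMap_germOf_of_forall_eq hg L (hL ▸ orthSet_anti ht0)
    (hσ ▸ isOrthantOfRank_orthSet a σ t) fun x hx => hfix x ?_)
  rintro ⟨Q, hQ, hxQ⟩
  exact Set.disjoint_left.1 (ht Q hQ) hx hxQ

end FiniteSupport

section Partition

variable {N : ℕ}

def IsOrthantPartition (𝓠 : Set (Set (Fin N → ℤ))) (X : Set (Fin N → ℤ)) : Prop :=
  𝓠.Finite ∧ (∀ P ∈ 𝓠, IsOrthant P) ∧ 𝓠.PairwiseDisjoint id ∧ ⋃₀ 𝓠 = X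

lemma IsOrthantPartition.insert {𝓠 : Set (Set (Fin N → ℤ))} {P X : Set (Fin N → ℤ)}
    (h : IsOrthantPartition 𝓠 X) (hP : IsOrthant P) (hPX : Disjoint P X) :
    IsOrthantPartition (insert P 𝓠) (P ∪ X) := by
  obtain ⟨hfin, horth, hdisj, rfl⟩ := h
  refine ⟨hfin.insert P, Set.forall_mem_insert.2 ⟨hP, horth⟩, hdisj.insert fun Q hQ _ => ?_,
    Set.sUnion_insert P 𝓠⟩
  exact hPX.mono_right (Set.subset_sUnion_of_mem hQ)

/-- Coordinatewise clamping to `[-R, R]`. Its fibres are orthants, and for `R` large every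
orthant of a finite family is a union of fibres; this is the grid cutting a Boolean
combination of orthants into disjoint orthants. -/
def clampVec (R : ℤ) (x : Fin N → ℤ) : Fin N → ℤ :=
  fun i => max (-R) (min R (x i))

lemma mem_coordSet_clamp_iff {c R z : ℤ} (hc : |c| < R) (o : Option ℤˣ) :
    max (-R) (min R z) ∈ coordSet c 0 o ↔ z ∈ coordSet c 0 o := by
  rcases o with _ | e
  · simp only [coordSet_none, Set.mem_singleton_iff]
    cases abs_cases c <;> omega
  · rcases Int.units_eq_one_or e with rfl | rfl <;> simp <;> cases abs_cases c <;> omega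

lemma clampVec_mem_orthSet_iff {a : Fin N → ℤ} {σ : Fin N → Option ℤˣ} {R : ℤ}
    (ha : ∀ i, |a i| < R) (x : Fin N → ℤ) :
    clampVec R x ∈ orthSet a σ 0 ↔ x ∈ orthSet a σ 0 := by
  simp only [orthSet, Set.mem_univ_pi, clampVec, mem_coordSet_clamp_iff (ha _)]

lemma eventually_clampVec_mem_iff {L : Set (Fin N → ℤ)} (hL : IsOrthant L) :
    ∀ᶠ R in atTop, ∀ x, clampVec R x ∈ L ↔ x ∈ L := by
  obtain ⟨m, hm⟩ := hL
  obtain ⟨a, σ, -, rfl⟩ := hm.exists_orthSet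
  exact (eventually_all.2 fun i => eventually_gt_atTop |a i|).mono fun R hR =>
    clampVec_mem_orthSet_iff hR

def clampDir (R c : ℤ) : Option ℤˣ :=
  if c = R then some 1 else if c = -R then some (-1) else none

lemma max_min_eq_iff_mem_coordSet {R c z : ℤ} (hR : 0 < R) (hc : -R ≤ c ∧ c ≤ R) :
    max (-R) (min R z) = c ↔ z ∈ coordSet c 0 (clampDir R c) := by
  unfold clampDir
  split_ifs <;> simp <;> omega

lemma setOf_clampVec_eq {R : ℤ} (hR : 0 < R) (y : Fin N → ℤ) :
    {x | clampVec R x = clampVec R y} =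
      orthSet (clampVec R y) (fun i => clampDir R (clampVec R y i)) 0 := by
  ext x
  simp only [Set.mem_ofPred_eq, orthSet, Set.mem_univ_pi, funext_iff]
  exact forall_congr' fun i => max_min_eq_iff_mem_coordSet hR (by simp only [clampVec]; omega)

lemma exists_isOrthantPartition_of_clampVec_mem_iff {X : Set (Fin N → ℤ)} {R : ℤ} (hR : 0 < R)
    (hX : ∀ x, clampVec R x ∈ X ↔ x ∈ X) : ∃ 𝓠, IsOrthantPartition 𝓠 X := by
  refine ⟨(fun c => {x | clampVec R x = c}) '' (clampVec R '' X), ?_, ?_, ?_, ?_⟩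
  · refine Set.Finite.image _ ((Set.Finite.pi (t := fun _ => Set.Icc (-R) R)
      fun _ => Set.finite_Icc _ _).subset ?_)
    rintro _ ⟨x, -, rfl⟩ i -
    exact ⟨le_max_left _ _, max_le (by omega) (min_le_left _ _)⟩
  · rintro _ ⟨_, ⟨y, -, rfl⟩, rfl⟩
    exact ⟨_, setOf_clampVec_eq hR y ▸ isOrthantOfRank_orthSet _ _ 0⟩
  · rintro _ ⟨c, -, rfl⟩ _ ⟨c', -, rfl⟩ hne
    exact Set.disjoint_left.2 fun x (hx : _ = c) (hx' : _ = c') =>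
      hne (congrArg (fun c => {x | clampVec R x = c}) (hx.symm.trans hx'))
  · ext x
    constructor
    · rintro ⟨_, ⟨_, ⟨y, hy, rfl⟩, rfl⟩, hxy : clampVec R x = clampVec R y⟩
      exact (hX x).1 (hxy ▸ (hX y).2 hy)
    · exact fun hx => ⟨_, ⟨_, ⟨x, hx, rfl⟩, rfl⟩, rfl⟩

lemma IsOrthohedral.exists_isOrthantPartition_diff {S M₁ M₂ : Set (Fin N → ℤ)}
    (hS : IsOrthohedral S) (h₁ : IsOrthant M₁) (h₂ : IsOrthant M₂) :
    ∃ 𝓠, IsOrthantPartition 𝓠 (S \ (M₁ ∪ M₂)) := by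
  obtain ⟨𝓛, h𝓛, horth, rfl⟩ := hS
  obtain ⟨R, ⟨⟨h𝓛R, h₁R⟩, h₂R⟩, hR⟩ :=
    ((((h𝓛.eventually_all.2 fun L hL => eventually_clampVec_mem_iff (horth L hL)).and
      (eventually_clampVec_mem_iff h₁)).and (eventually_clampVec_mem_iff h₂)).and
      (eventually_gt_atTop 0)).exists
  refine exists_isOrthantPartition_of_clampVec_mem_iff hR fun x => ?_
  simp only [Set.mem_sdiff, Set.mem_sUnion, Set.mem_union, h₁R, h₂R]
  exact and_congr_left' (exists_congr fun L => and_congr_right fun hL => h𝓛R L hL x)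

end Partition

section Swap

variable {N : ℕ}

def orthPerm (c : Fin N → ℤ) (A : Matrix (Fin N) (Fin N) ℤ) (hA : IsOrthMat A) :
    Equiv.Perm (Fin N → ℤ) where
  toFun x := c + A.mulVec x
  invFun y := A.transpose.mulVec (y - c)
  left_inv x := by simp [Matrix.mulVec_mulVec, mul_eq_one_comm.1 hA]
  right_inv y := by simp [Matrix.mulVec_mulVec, show A * A.transpose = 1 from hA]

lemma image_comp_stdFace {π : Equiv.Perm (Fin N)} {Y Y' : Finset (Fin N)}
    (h : ∀ i, π i ∈ Y ↔ i ∈ Y') : (fun v => v ∘ π) '' stdFace N Y = stdFace N Y' := by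
  ext w
  constructor
  · rintro ⟨v, ⟨hv0, hvY⟩, rfl⟩
    exact ⟨fun i => hv0 (π i), fun i hi => hvY (π i) (mt (h i).1 hi)⟩
  · rintro ⟨hw0, hwY⟩
    refine ⟨w ∘ π.symm, ⟨fun j => hw0 _, fun j hj => hwY _ ?_⟩, by simp [Function.comp_def]⟩
    rwa [← h, Equiv.apply_symm_apply]

lemma exists_perm_isometricOn_image_eq {L L' : Set (Fin N → ℤ)} {k : ℕ}
    (hL : IsOrthantOfRank L k) (hL' : IsOrthantOfRank L' k) :
    ∃ e : Equiv.Perm (Fin N → ℤ), IsometricOn e L ∧ e '' L = L' := by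
  obtain ⟨a, A, Y, hA, hY, rfl⟩ := hL
  obtain ⟨a', A', Y', hA', hY', rfl⟩ := hL'
  obtain ⟨π, hπ⟩ := Equiv.Perm.exists_map_finset_eq Y' Y (hY'.trans hY.symm)
  have hπY : ∀ i, π i ∈ Y ↔ i ∈ Y' := fun i => by simp [← hπ]
  set B := A' * π.permMatrix ℤ * A.transpose
  have hB : IsOrthMat B := (hA'.mul (isOrthMat_permMatrix π)).mul hA.transpose
  refine ⟨orthPerm (a' - B.mulVec a) B hB, ⟨_, B, hB, fun x _ => rfl⟩, ?_⟩
  rw [← image_comp_stdFace hπY, Set.image_image, Set.image_image]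
  refine Set.image_congr fun v _ => ?_
  change a' - B.mulVec a + B.mulVec (a + A.mulVec v) = a' + A'.mulVec (v ∘ π)
  rw [← Matrix.permMatrix_mulVec, Matrix.mulVec_add, Matrix.mulVec_mulVec, Matrix.mulVec_mulVec,
    Matrix.mul_assoc, mul_eq_one_comm.1 hA, Matrix.mul_one]
  abel

lemma exists_perm_swapping {α : Type*} (e : Equiv.Perm α) {A B : Set α} (hAB : Disjoint A B)
    (he : e '' A = B) :
    ∃ g : Equiv.Perm α, (∀ x ∈ A, g x = e x) ∧ (∀ y ∈ B, g y = e.symm y) ∧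
      ∀ x, x ∉ A → x ∉ B → g x = x := by
  classical
  set f : α → α := fun x => if x ∈ A then e x else if x ∈ B then e.symm x else x
  have hfA : ∀ x ∈ A, f x = e x := fun x hx => if_pos hx
  have hfB : ∀ y ∈ B, f y = e.symm y := fun y hy => by
    simp [f, hy, Set.disjoint_right.1 hAB hy]
  have hfo : ∀ x, x ∉ A → x ∉ B → f x = x := fun x hA hB => by simp [f, hA, hB]
  have heA : ∀ x ∈ A, e x ∈ B := fun x hx => he ▸ Set.mem_image_of_mem e hx
  have heB : ∀ y ∈ B, e.symm y ∈ A := fun y hy => by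
    rw [← he] at hy
    obtain ⟨x, hx, rfl⟩ := hy
    simpa using hx
  have hf : Function.Involutive f := fun x => by
    by_cases hxA : x ∈ A
    · rw [hfA x hxA, hfB _ (heA x hxA), e.symm_apply_apply]
    by_cases hxB : x ∈ B
    · rw [hfB x hxB, hfA _ (heB x hxB), e.apply_symm_apply]
    · rw [hfo x hxA hxB, hfo x hxA hxB]
  exact ⟨hf.toPerm f, hfA, hfB, hfo⟩

variable {S : Set (Fin N → ℤ)} {k : ℕ}

lemma exists_isPeiPerm_swapping (hS : IsOrthohedral S) {M₁ M₂ : Set (Fin N → ℤ)}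
    (hM₁ : IsOrthantOfRank M₁ k) (hM₂ : IsOrthantOfRank M₂ k) (hM₁₂S : M₁ ∪ M₂ ⊆ S)
    (hdisj : Disjoint M₁ M₂) :
    ∃ g : Equiv.Perm (Fin N → ℤ), IsPeiPerm S g ∧ rankLE g k ∧
      IsometricOn g M₁ ∧ g '' M₁ = M₂ ∧ IsometricOn g M₂ ∧ g '' M₂ = M₁ ∧
      ∀ x, x ∉ M₁ → x ∉ M₂ → g x = x := by
  obtain ⟨e, he, heM⟩ := exists_perm_isometricOn_image_eq hM₁ hM₂
  obtain ⟨g, hg₁, hg₂, hgo⟩ := exists_perm_swapping e hdisj heM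
  obtain ⟨𝓠, h𝓠⟩ := hS.exists_isOrthantPartition_diff ⟨k, hM₁⟩ ⟨k, hM₂⟩
  have hiso₁ : IsometricOn g M₁ := he.congr hg₁
  have hiso₂ : IsometricOn g M₂ := (heM ▸ he.symm_image).congr hg₂
  have hpart : IsOrthantPartition (insert M₁ (insert M₂ 𝓠)) S := by
    have := (h𝓠.insert ⟨k, hM₂⟩ (Set.disjoint_sdiff_right.mono_left Set.subset_union_right)).insert
      ⟨k, hM₁⟩ (Set.disjoint_union_right.2
        ⟨hdisj, Set.disjoint_sdiff_right.mono_left Set.subset_union_left⟩)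
    rwa [← Set.union_assoc, Set.union_sdiff_cancel hM₁₂S] at this
  have hfix : ∀ x, x ∉ M₁ ∪ M₂ → g x = x := fun x hx =>
    hgo x (fun h => hx (.inl h)) fun h => hx (.inr h)
  have hiso : ∀ P ∈ insert M₁ (insert M₂ 𝓠), IsometricOn g P := by
    rintro P (rfl | rfl | hP)
    · exact hiso₁
    · exact hiso₂
    · exact isometricOn_of_forall_eq fun x hx =>
        hfix x (h𝓠.2.2.2 ▸ Set.mem_sUnion_of_mem hx hP).2
  have hrank : rankLE g k := by
    refine ⟨⋃₀ {M₁, M₂}, ⟨_, Set.toFinite _, ?_, rfl⟩, orthRank_sUnion_le (Set.toFinite _) ?_,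
      fun x hx => hfix x (by rwa [Set.sUnion_pair] at hx)⟩
    · rintro P (rfl | rfl)
      exacts [⟨k, hM₁⟩, ⟨k, hM₂⟩]
    · rintro P (rfl | rfl)
      exacts [⟨k, le_rfl, hM₁⟩, ⟨k, le_rfl, hM₂⟩]
  exact ⟨g, ⟨⟨_, hpart.1, hpart.2.1, hpart.2.2.2.symm, hpart.2.2.1, hiso⟩,
      fun x hx => hfix x fun h => hx (hM₁₂S h)⟩,
    hrank, hiso₁, by rw [Set.image_congr hg₁, heM], hiso₂,
    by rw [Set.image_congr hg₂, ← heM, e.symm_image_image], hgo⟩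

/-- Exchange a deep part `M₁` of a representative of the first germ, chosen to miss a
representative of the second, with that representative. -/
lemma exists_isPeiPerm_germMap_eq_swap [DecidableEq (Germ S k)] (hS : IsOrthohedral S)
    {L₁ L₂ : germSet S k} (hne : ¬Commensurable L₁.1 L₂.1) :
    ∃ (g : Equiv.Perm (Fin N → ℤ)) (hg : IsPeiPerm S g), rankLE g k ∧
      ∀ γ : Germ S k, germMap g hg γ = Equiv.swap (germOf S k L₁) (germOf S k L₂) γ := by
  obtain ⟨a, σ, hσ, hL₁⟩ := L₁.2.1.exists_orthSet
  obtain ⟨t, hdisj, ht0⟩ := ((eventually_disjoint_of_not_commensurable L₂.2.1 hσ.ge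
    (hL₁ ▸ hne)).and (eventually_ge_atTop 0)).exists
  set M₁ := orthSet a σ t
  have hM₁ : IsOrthantOfRank M₁ k := hσ ▸ isOrthantOfRank_orthSet a σ t
  have hM₁L₁ : M₁ ⊆ L₁.1 := hL₁ ▸ orthSet_anti ht0
  have hM₁comm : Commensurable L₁.1 M₁ := commensurable_of_subset hM₁ L₁.2.1 hM₁L₁
  obtain ⟨g, hg, hrank, hiso₁, himg₁, hiso₂, himg₂, hgo⟩ := exists_isPeiPerm_swapping hS hM₁
    L₂.2.1 (Set.union_subset (hM₁L₁.trans L₁.2.2) L₂.2.2) hdisj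
  refine ⟨g, hg, hrank, fun γ => ?_⟩
  induction γ using Quot.ind with
  | mk L =>
  change germMap g hg (germOf S k L) = Equiv.swap (germOf S k L₁) (germOf S k L₂) (germOf S k L)
  by_cases h₁ : Commensurable L.1 L₁.1
  · rw [germOf_eq_germOf_iff.2 h₁, Equiv.swap_apply_left,
      germMap_germOf hg L₁ ⟨hM₁L₁, hM₁, hiso₁⟩, germOf_eq_germOf_iff]
    change Commensurable (g '' M₁) L₂.1
    rw [himg₁]
    exact commensurable_refl L₂.2.1
  by_cases h₂ : Commensurable L.1 L₂.1
  · rw [germOf_eq_germOf_iff.2 h₂, Equiv.swap_apply_right,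
      germMap_germOf hg L₂ ⟨subset_rfl, L₂.2.1, hiso₂⟩, germOf_eq_germOf_iff]
    change Commensurable (g '' L₂.1) L₁.1
    rw [himg₂]
    exact hM₁comm.symm
  rw [Equiv.swap_apply_of_ne_of_ne (mt germOf_eq_germOf_iff.1 h₁)
    (mt germOf_eq_germOf_iff.1 h₂)]
  obtain ⟨b, τ, hτ, hL⟩ := L.2.1.exists_orthSet
  have h₁' : ¬Commensurable L.1 M₁ := fun h => h₁ (h.trans hM₁comm.symm L.2.1 hM₁ L₁.2.1)
  obtain ⟨s, ⟨hs₁, hs₂⟩, hs0⟩ :=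
    (((eventually_disjoint_of_not_commensurable hM₁ hτ.ge (hL ▸ h₁')).and
      (eventually_disjoint_of_not_commensurable L₂.2.1 hτ.ge (hL ▸ h₂))).and
      (eventually_ge_atTop 0)).exists
  exact germMap_germOf_of_forall_eq hg L (hL ▸ orthSet_anti hs0)
    (hτ ▸ isOrthantOfRank_orthSet b τ s) fun x hx =>
      hgo x (Set.disjoint_left.1 hs₁ hx) (Set.disjoint_left.1 hs₂ hx)

end Swap

lemma mem_of_forall_swap_mem {α : Type*} [DecidableEq α] {K : Subgroup (Equiv.Perm α)}
    (hK : ∀ x y, x ≠ y → Equiv.swap x y ∈ K) {σ : Equiv.Perm α} (hσ : {x | σ x ≠ x}.Finite) :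
    σ ∈ K :=
  (Subgroup.closure_le K).2 (by rintro _ ⟨x, y, hxy, rfl⟩; exact hK x y hxy)
    (mem_closure_isSwap'.2 hσ)

section Range

variable {N : ℕ} {S : Set (Fin N → ℤ)} {k : ℕ}

lemma range_germHom (hS : IsOrthohedral S) (H : Subgroup (Equiv.Perm (Fin N → ℤ)))
    (hH : ∀ g, g ∈ H ↔ IsPeiPerm S g ∧ rankLE g k) :
    Set.range (germHom (k := k) H fun g hg => ((hH g).1 hg).1) =
      {σ | {γ | σ γ ≠ γ}.Finite} := by
  classical
  refine subset_antisymm ?_ fun σ hσ => ?_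
  · rintro _ ⟨g, rfl⟩
    exact finite_setOf_germMap_ne ((hH g).1 g.2).1 ((hH g).1 g.2).2
  rw [← MonoidHom.coe_range]
  refine mem_of_forall_swap_mem (fun γ₁ γ₂ hne => ?_) hσ
  induction γ₁ using Quot.ind with
  | mk L₁ =>
  induction γ₂ using Quot.ind with
  | mk L₂ =>
  obtain ⟨g, hg, hrk, hswap⟩ :=
    exists_isPeiPerm_germMap_eq_swap hS (mt germOf_eq_germOf_iff.2 hne)
  exact MonoidHom.mem_range.2 ⟨⟨g, (hH g).2 ⟨hg, hrk⟩⟩, Equiv.ext hswap⟩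

end Range

theorem stmt11_general {N : ℕ} (S : Set (Fin N → ℤ)) (hS : IsOrthohedral S) (k : ℕ)
    (Gk : Subgroup (Equiv.Perm (Fin N → ℤ)))
    (hGk : (Gk : Set (Equiv.Perm (Fin N → ℤ))) = {g | IsPeiPerm S g ∧ rankLE g k}) :
    ∃ φ : ↥Gk →* Equiv.Perm (Germ S k),
      (∀ g : ↥Gk, InducesGermMap S k (↑g) ⇑(φ g)) ∧
      ((φ.ker : Set ↥Gk) = {g : ↥Gk | FixesGerm S k (↑g : Equiv.Perm (Fin N → ℤ))}) ∧
      (Set.range ⇑φ = {σ : Equiv.Perm (Germ S k) | {γ | σ γ ≠ γ}.Finite}) := by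
  have hG : ∀ g, g ∈ Gk ↔ IsPeiPerm S g ∧ rankLE g k := fun g => by
    rw [← SetLike.mem_coe, hGk, Set.mem_ofPred_eq]
  refine ⟨germHom Gk fun g hg => ((hG g).1 hg).1,
    fun g => inducesGermMap_germMap ((hG g).1 g.2).1, ?_, range_germHom hS Gk hG⟩
  ext g
  exact MonoidHom.mem_ker.trans (Equiv.ext_iff.trans (forall_germMap_eq_iff ((hG g).1 g.2).1))

/-- the action on rank-`k` germs induces an isomorphism
`G_k(S)/C(Γ^k(S)) ≅ sym(Γ^k(S))` onto the finitary symmetric group. -/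
theorem stmt11 {N : ℕ} (S : Set (Fin N → ℤ)) (hS : IsOrthohedral S) (k : ℕ)
    (hk : k ≤ orthRank S)
    (Gk : Subgroup (Equiv.Perm (Fin N → ℤ)))
    (hGk : (Gk : Set (Equiv.Perm (Fin N → ℤ))) = {g | IsPeiPerm S g ∧ rankLE g k}) :
    ∃ φ : ↥Gk →* Equiv.Perm (Germ S k),
      (∀ g : ↥Gk, InducesGermMap S k (↑g) ⇑(φ g)) ∧
      ((φ.ker : Set ↥Gk) = {g : ↥Gk | FixesGerm S k (↑g : Equiv.Perm (Fin N → ℤ))}) ∧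
      (Set.range ⇑φ = {σ : Equiv.Perm (Germ S k) | {γ | σ γ ≠ γ}.Finite}) :=
  stmt11_general S hS k Gk hGk

end PeiPaper
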